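/- arXiv:2007.12614 — 5 statements merged into one kernel-verified Lean document; each statement's English description precedes it below -/
import Mathlib

section
/- Let a, l, M > 0 with a < l, let Δ(r) := (a² + r²)(1 + r²/l²) − 2Mr, and suppose Δ has two positive real roots 0 < r₋ < r₊ (with Δ > 0 on (r₊,∞), Δ < 0 on (r₋, r₊), and Δ'(r₋) < 0). Then r₋² < a·l. -/
/-- For the Kerr–AdS horizon polynomial `Δ(r) = (a² + r²)(1 + r²/l²) − 2Mr` with two positive
roots `0 < r₋ < r₊` (Δ positive beyond `r₊`, negative between them, and `Δ'(r₋) < 0`), the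
Cauchy horizon radius satisfies `r₋² < a·l`. -/
theorem cauchy_horizon_radius_lt (a l M rm rp : ℝ)
    (ha : 0 < a) (hal : a < l) (hM : 0 < M)
    (hrm : 0 < rm) (hrmrp : rm < rp)
    (hΔm : (a ^ 2 + rm ^ 2) * (1 + rm ^ 2 / l ^ 2) - 2 * M * rm = 0)
    (hΔp : (a ^ 2 + rp ^ 2) * (1 + rp ^ 2 / l ^ 2) - 2 * M * rp = 0)
    (hpos : ∀ r, rp < r → 0 < (a ^ 2 + r ^ 2) * (1 + r ^ 2 / l ^ 2) - 2 * M * r)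
    (hneg : ∀ r, rm < r → r < rp → (a ^ 2 + r ^ 2) * (1 + r ^ 2 / l ^ 2) - 2 * M * r < 0)
    (hder : deriv (fun r => (a ^ 2 + r ^ 2) * (1 + r ^ 2 / l ^ 2) - 2 * M * r) rm < 0) :
    rm ^ 2 < a * l := by
  have hl : (0:ℝ) < l := ha.trans hal
  have hl2 : (l:ℝ)^2 ≠ 0 := by positivity
  have hD : deriv (fun r => (a ^ 2 + r ^ 2) * (1 + r ^ 2 / l ^ 2) - 2 * M * r) rm
      = 2*rm*(1 + rm^2/l^2) + (a^2 + rm^2)*(2*rm/l^2) - 2*M := by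
    have h1 : HasDerivAt (fun r : ℝ => (a ^ 2 + r ^ 2) * (1 + r ^ 2 / l ^ 2) - 2 * M * r)
        ((0 + 2*rm^1)*(1 + rm^2/l^2) + (a^2 + rm^2)*(0 + 2*rm^1/l^2) - 2*M*1) rm := by
      exact (((hasDerivAt_const rm (a^2)).add ((hasDerivAt_pow 2 rm))).mul
        ((hasDerivAt_const rm 1).add ((hasDerivAt_pow 2 rm).div_const (l^2)))).sub
        ((hasDerivAt_id rm).const_mul (2*M))
    rw [h1.deriv]; ring
  rw [hD] at hder
  have hM' : 2*M*rm = (a^2 + rm^2)*(1 + rm^2/l^2) := by linarith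
  have key : 3*rm^4 + rm^2*a^2 + rm^2*l^2 - a^2*l^2 < 0 := by
    have h2 : (2*rm*(1 + rm^2/l^2) + (a^2 + rm^2)*(2*rm/l^2) - 2*M) * (rm * l^2) < 0 := by
      apply mul_neg_of_neg_of_pos hder; positivity
    have e : (2*rm*(1 + rm^2/l^2) + (a^2 + rm^2)*(2*rm/l^2) - 2*M) * (rm * l^2)
        = (3*rm^4 + rm^2*a^2 + rm^2*l^2 - a^2*l^2) - (2*M*rm - (a^2 + rm^2)*(1 + rm^2/l^2)) * l^2 := by
      field_simp; ring
    rw [e, hM'] at h2; linarith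
  nlinarith [sq_nonneg (rm^2 - a*l), sq_nonneg rm, mul_pos ha hl, sq_nonneg (rm^2 + a*l)]
end

section
/- Let 0 < a < l, Ξ := 1 − a²/l², r₋ > 0 with r₋² < a·l, and ω₋ := aΞ/(r₋² + a²). Define, for λ̃ ∈ ℝ, the polynomial W₁(x) := Ξ² − [Ξ a² ω₋² + 2 a ω₋ Ξ a²/l²] x²(1 − x²) − λ̃ (1 − (a²/l²)x²)(1 − x²) on [0,1]. If λ̃ < Ξ², then W₁(x) > 0 for all x ∈ [0,1]. -/
set_option maxHeartbeats 1000000 in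
/-- Positivity of the semiclassical angular potential `W₁` on `[0,1]` when `λ̃ < Ξ²`:
with `Ξ = 1 − a²/l²`, `ω₋ = aΞ/(r₋² + a²)`, `Δ_x = 1 − (a²/l²)x²` and
`W₁(x) = Ξ² − [Ξ a² ω₋² + 2aω₋Ξ a²/l²] x²(1 − x²) − λ̃ Δ_x (1 − x²)`,
if `λ̃ < Ξ²` then `W₁(x) > 0` for all `x ∈ [0,1]`. -/
theorem angular_potential_pos (a l rm Ξ ωm lamt : ℝ)
    (ha : 0 < a) (hal : a < l) (hrm : 0 < rm) (hr : rm ^ 2 < a * l)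
    (hΞ : Ξ = 1 - a ^ 2 / l ^ 2) (hω : ωm = a * Ξ / (rm ^ 2 + a ^ 2))
    (hlam : lamt < Ξ ^ 2) :
    ∀ x ∈ Set.Icc (0 : ℝ) 1,
      0 < Ξ ^ 2 - (Ξ * a ^ 2 * ωm ^ 2 + 2 * a * ωm * Ξ * a ^ 2 / l ^ 2) * x ^ 2 * (1 - x ^ 2)
          - lamt * (1 - (a ^ 2 / l ^ 2) * x ^ 2) * (1 - x ^ 2) := by
  intro x hx
  obtain ⟨hx0, hx1⟩ := hx
  have hl : 0 < l := ha.trans hal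
  have hl2 : (0:ℝ) < l ^ 2 := by positivity
  have hden : 0 < rm ^ 2 + a ^ 2 := by positivity
  obtain ⟨k, hk⟩ : ∃ k : ℝ, k = a ^ 2 / l ^ 2 := ⟨_, rfl⟩
  obtain ⟨u, hu⟩ : ∃ u : ℝ, u = a * ωm := ⟨_, rfl⟩
  have hk0 : 0 < k := by rw [hk]; positivity
  have hk1 : k < 1 := by rw [hk, div_lt_one hl2]; nlinarith
  have hΞk : Ξ = 1 - k := by rw [hΞ, hk]
  have hu0 : 0 < u := by
    rw [hu, hω]
    have hΞpos : 0 < Ξ := by rw [hΞk]; linarith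
    exact mul_pos ha (div_pos (mul_pos ha hΞpos) hden)
  have hud : u * (rm ^ 2 + a ^ 2) = a ^ 2 * Ξ := by
    rw [hu, hω]; field_simp
  have huΞ : u < Ξ := by
    have hΞpos : 0 < Ξ := by rw [hΞk]; linarith
    nlinarith [mul_pos hΞpos (pow_pos hrm 2)]
  have hgoal : Ξ ^ 2 - (Ξ * a ^ 2 * ωm ^ 2 + 2 * a * ωm * Ξ * a ^ 2 / l ^ 2) * x ^ 2 * (1 - x ^ 2)
          - lamt * (1 - (a ^ 2 / l ^ 2) * x ^ 2) * (1 - x ^ 2)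
      = Ξ ^ 2 - (Ξ * u ^ 2 + 2 * u * Ξ * k) * x ^ 2 * (1 - x ^ 2)
          - lamt * (1 - k * x ^ 2) * (1 - x ^ 2) := by
    rw [hu, hk]; ring
  rw [hgoal]
  subst hΞk
  have hx2 : x ^ 2 ≤ 1 := by nlinarith
  have hC : (1 - k) * u ^ 2 + 2 * u * (1 - k) * k ≤ (1 - k) ^ 2 * (1 + k) := by
    nlinarith [mul_pos (mul_pos (show (0:ℝ) < 1 - k by linarith)
      (show (0:ℝ) < 1 - k - u by linarith)) (show (0:ℝ) < 1 + k + u by linarith)]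
  rcases eq_or_lt_of_le hx2 with h1 | h1
  · rw [h1]
    nlinarith
  · have hkx : 0 < 1 - k * x ^ 2 := by nlinarith
    have hP2 : 0 < ((1 - k) ^ 2 - lamt) * ((1 - k * x ^ 2) * (1 - x ^ 2)) :=
      mul_pos (by linarith) (mul_pos hkx (by linarith))
    have hP1 : 0 ≤ x ^ 2 * ((1 - k) ^ 2 * (1 + k * (1 - x ^ 2))
        - ((1 - k) * u ^ 2 + 2 * u * (1 - k) * k) * (1 - x ^ 2)) := by
      apply mul_nonneg (sq_nonneg x)
      nlinarith [mul_nonneg (show (0:ℝ) ≤ 1 - x ^ 2 by linarith) (sub_nonneg.mpr hC),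
        mul_nonneg (sq_nonneg x) (sq_nonneg (1 - k))]
    have hsum : (1 - k) ^ 2 - ((1 - k) * u ^ 2 + 2 * u * (1 - k) * k) * x ^ 2 * (1 - x ^ 2)
          - lamt * (1 - k * x ^ 2) * (1 - x ^ 2)
        = x ^ 2 * ((1 - k) ^ 2 * (1 + k * (1 - x ^ 2))
            - ((1 - k) * u ^ 2 + 2 * u * (1 - k) * k) * (1 - x ^ 2))
          + ((1 - k) ^ 2 - lamt) * ((1 - k * x ^ 2) * (1 - x ^ 2)) := by ring
    rw [hsum]
    linarith
end

section
/- Let 0 < a < l, Ξ := 1 − a²/l², r₋ > 0, and ω₋ := aΞ/(r₋² + a²). Define W₁(x) := Ξ² − [Ξ a² ω₋² + 2 a ω₋ Ξ a²/l²] x²(1 − x²) − λ̃ Δ_x (1 − x²) with Δ_x := 1 − (a²/l²)x². If λ̃ > Ξ², then there is a constant c > 0 (depending on a, l, r₋) such that dW₁/dx ≥ c·λ̃·x for all x ∈ [0,1]; consequently W₁ is strictly increasing on [0,1] and has exactly one root x₀ in [0,1], and x₀ ∈ (0,1). -/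
/-!
With `μ = a²/l²` (so `Ξ = 1 - μ`) and `K = Ξ a² ω₋² + 2 a ω₋ Ξ a²/l²`, the potential is the even
quartic `W₁(x) = (Ξ² - λ̃) + a₁ x² + a₂ x⁴` with `a₁ = λ̃(1 + μ) - K` and `a₂ = K - λ̃ μ`. Putting
`t = a²/(r₋² + a²) ∈ (0, 1)` gives `K = Ξ³ t² + 2 Ξ² μ t < Ξ²(1 + μ)`, so for `λ̃ > Ξ²` both `2a₁` and
`2a₁ + 4a₂ = 2Ξλ̃ + 2K` are at least a fixed multiple `c λ̃`. Since `dW₁/dx = x (2a₁ + 4a₂ x²)` and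
`2a₁ + 4a₂ x²` interpolates between these two values, `dW₁/dx ≥ c λ̃ x`. The root is then unique by
monotonicity and exists by the intermediate value theorem, as `W₁(0) = Ξ² - λ̃ < 0 < Ξ² = W₁(1)`.
-/

open Set

section RootOfStrictMono

variable {α δ : Type*} [ConditionallyCompleteLinearOrder α] [TopologicalSpace α] [OrderTopology α]
  [DenselyOrdered α] [LinearOrder δ] [TopologicalSpace δ] [OrderClosedTopology δ]

theorem StrictMonoOn.existsUnique_eq_of_mem_Icc {f : α → δ} {a b : α} {y : δ} (hab : a ≤ b)
    (hf : ContinuousOn f (Icc a b)) (hmono : StrictMonoOn f (Icc a b)) (hy : y ∈ Icc (f a) (f b)) :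
    ∃! x, x ∈ Icc a b ∧ f x = y := by
  obtain ⟨x, hx, hfx⟩ := intermediate_value_Icc hab hf hy
  exact ⟨x, ⟨hx, hfx⟩, fun z ⟨hz, hfz⟩ => hmono.injOn hz hx (hfz.trans hfx.symm)⟩

end RootOfStrictMono

theorem mem_Ioo_of_apply_eq {α β : Type*} [PartialOrder α] [Preorder β] {f : α → β} {a b x : α}
    {y : β} (hx : x ∈ Icc a b) (ha : f a < y) (hb : y < f b) (hfx : f x = y) : x ∈ Ioo a b := by
  refine ⟨hx.1.lt_of_ne ?_, hx.2.lt_of_ne ?_⟩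
  · rintro rfl; exact ha.ne hfx
  · rintro rfl; exact hb.ne' hfx

section EvenQuartic

def evenQuartic (p q r : ℝ) (x : ℝ) : ℝ := p + q * x ^ 2 + r * x ^ 4

variable {p q r C : ℝ}

theorem hasDerivAt_evenQuartic (x : ℝ) :
    HasDerivAt (evenQuartic p q r) (2 * q * x + 4 * r * x ^ 3) x := by
  have h := ((hasDerivAt_const x p).add ((hasDerivAt_pow 2 x).const_mul q)).add
    ((hasDerivAt_pow 4 x).const_mul r)
  exact h.congr_deriv (by push_cast; ring)

theorem continuous_evenQuartic : Continuous (evenQuartic p q r) := by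
  unfold evenQuartic; fun_prop

/-- `2q + 4r x²` is the convex combination `(1 - x²) (2q) + x² (2q + 4r)`. -/
theorem mul_le_deriv_evenQuartic (hq : C ≤ 2 * q) (hqr : C ≤ 2 * q + 4 * r) {x : ℝ}
    (hx : x ∈ Icc 0 1) : C * x ≤ deriv (evenQuartic p q r) x := by
  obtain ⟨hx0, hx1⟩ := hx
  have hx2 : x ^ 2 ≤ 1 := pow_le_one₀ hx0 hx1
  have hslope : C ≤ 2 * q + 4 * r * x ^ 2 := by nlinarith [sq_nonneg x]
  rw [(hasDerivAt_evenQuartic x).deriv]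
  nlinarith

theorem strictMonoOn_evenQuartic (hC : 0 < C) (hq : C ≤ 2 * q) (hqr : C ≤ 2 * q + 4 * r) :
    StrictMonoOn (evenQuartic p q r) (Icc 0 1) := by
  refine strictMonoOn_of_deriv_pos (convex_Icc 0 1) continuous_evenQuartic.continuousOn ?_
  rw [interior_Icc]
  intro x hx
  exact (mul_pos hC hx.1).trans_le (mul_le_deriv_evenQuartic hq hqr (Ioo_subset_Icc_self hx))

theorem evenQuartic_unique_root (hC : 0 < C) (hq : C ≤ 2 * q) (hqr : C ≤ 2 * q + 4 * r) (hp : p < 0)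
    (hpqr : 0 < p + q + r) :
    (∀ x ∈ Icc (0 : ℝ) 1, C * x ≤ deriv (evenQuartic p q r) x) ∧
      StrictMonoOn (evenQuartic p q r) (Icc 0 1) ∧
      (∃! x₀, x₀ ∈ Icc (0 : ℝ) 1 ∧ evenQuartic p q r x₀ = 0) ∧
      (∀ x₀ ∈ Icc (0 : ℝ) 1, evenQuartic p q r x₀ = 0 → x₀ ∈ Ioo (0 : ℝ) 1) := by
  have h0 : evenQuartic p q r 0 < 0 := by simpa [evenQuartic] using hp
  have h1 : 0 < evenQuartic p q r 1 := by simpa [evenQuartic] using hpqr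
  have hmono := strictMonoOn_evenQuartic (p := p) hC hq hqr
  exact ⟨fun x hx => mul_le_deriv_evenQuartic hq hqr hx, hmono,
    hmono.existsUnique_eq_of_mem_Icc zero_le_one continuous_evenQuartic.continuousOn
      ⟨h0.le, h1.le⟩,
    fun x₀ hx₀ hfx₀ => mem_Ioo_of_apply_eq hx₀ h0 h1 hfx₀⟩

end EvenQuartic

theorem sq_div_sq_mem_Ioo {a l : ℝ} (ha : 0 < a) (hal : a < l) : a ^ 2 / l ^ 2 ∈ Ioo 0 1 :=
  ⟨by have := ha.trans hal; positivity,
    (div_lt_one (by nlinarith)).2 (pow_lt_pow_left₀ hal ha.le two_ne_zero)⟩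

theorem angular_coupling_bounds {a l rm Ξ ωm : ℝ} (ha : 0 < a) (hal : a < l) (hrm : 0 < rm)
    (hΞ : Ξ = 1 - a ^ 2 / l ^ 2) (hω : ωm = a * Ξ / (rm ^ 2 + a ^ 2)) :
    0 ≤ Ξ * a ^ 2 * ωm ^ 2 + 2 * a * ωm * Ξ * a ^ 2 / l ^ 2 ∧
      Ξ * a ^ 2 * ωm ^ 2 + 2 * a * ωm * Ξ * a ^ 2 / l ^ 2 < Ξ ^ 2 * (1 + a ^ 2 / l ^ 2) := by
  have hl : 0 < l := ha.trans hal
  obtain ⟨hμ0, hμ1⟩ := sq_div_sq_mem_Ioo ha hal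
  set μ := a ^ 2 / l ^ 2 with hμ
  have hΞ0 : 0 < Ξ := by linarith
  set t := a ^ 2 / (rm ^ 2 + a ^ 2) with ht
  have ht0 : 0 < t := by positivity
  have ht1 : t < 1 := (div_lt_one (by positivity)).2 (by nlinarith)
  have hK : Ξ * a ^ 2 * ωm ^ 2 + 2 * a * ωm * Ξ * a ^ 2 / l ^ 2
      = Ξ ^ 3 * t ^ 2 + 2 * Ξ ^ 2 * μ * t := by
    rw [hω, ht, hμ]; field_simp
  rw [hK]
  refine ⟨by positivity, ?_⟩
  have hΞ3 : Ξ ^ 3 * t ^ 2 < Ξ ^ 3 :=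
    mul_lt_of_lt_one_right (by positivity) (pow_lt_one₀ ht0.le ht1 two_ne_zero)
  have hΞμ : 2 * Ξ ^ 2 * μ * t < 2 * Ξ ^ 2 * μ := mul_lt_of_lt_one_right (by positivity) ht1
  calc Ξ ^ 3 * t ^ 2 + 2 * Ξ ^ 2 * μ * t < Ξ ^ 3 + 2 * Ξ ^ 2 * μ := by linarith
    _ = Ξ ^ 2 * (1 + μ) := by rw [hΞ]; ring

theorem min_mul_le_quartic_coeffs {μ K s lam : ℝ} (hK : 0 ≤ K) (hs : 0 < s) (hlam : s ≤ lam) :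
    min (2 * (1 + μ - K / s)) (2 * (1 - μ)) * lam ≤ 2 * (lam * (1 + μ) - K) ∧
      min (2 * (1 + μ - K / s)) (2 * (1 - μ)) * lam
        ≤ 2 * (lam * (1 + μ) - K) + 4 * (K - lam * μ) := by
  have hlam0 : 0 ≤ lam := hs.le.trans hlam
  have hKlam : K ≤ K / s * lam := by
    rw [div_mul_eq_mul_div, le_div_iff₀ hs]; exact mul_le_mul_of_nonneg_left hlam hK
  constructor
  · calc min (2 * (1 + μ - K / s)) (2 * (1 - μ)) * lam ≤ 2 * (1 + μ - K / s) * lam :=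
          mul_le_mul_of_nonneg_right (min_le_left _ _) hlam0
      _ ≤ 2 * (lam * (1 + μ) - K) := by linarith
  · calc min (2 * (1 + μ - K / s)) (2 * (1 - μ)) * lam ≤ 2 * (1 - μ) * lam :=
          mul_le_mul_of_nonneg_right (min_le_right _ _) hlam0
      _ ≤ 2 * (lam * (1 + μ) - K) + 4 * (K - lam * μ) := by linarith

/-- For `λ̃ > Ξ²`, the angular potential `W₁` satisfies `dW₁/dx ≥ c λ̃ x` on `[0,1]` for a
constant `c > 0` depending only on `a, l, r₋`; consequently `W₁` is strictly increasing on
`[0,1]` and has exactly one root there, which lies in `(0,1)`. -/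
theorem angular_potential_unique_root (a l rm Ξ ωm : ℝ)
    (ha : 0 < a) (hal : a < l) (hrm : 0 < rm)
    (hΞ : Ξ = 1 - a ^ 2 / l ^ 2) (hω : ωm = a * Ξ / (rm ^ 2 + a ^ 2)) :
    ∃ c : ℝ, 0 < c ∧ ∀ lamt : ℝ, Ξ ^ 2 < lamt →
      ∀ W1 : ℝ → ℝ,
        (W1 = fun x =>
          Ξ ^ 2 - (Ξ * a ^ 2 * ωm ^ 2 + 2 * a * ωm * Ξ * a ^ 2 / l ^ 2) * x ^ 2 * (1 - x ^ 2)
            - lamt * (1 - (a ^ 2 / l ^ 2) * x ^ 2) * (1 - x ^ 2)) →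
        (∀ x ∈ Set.Icc (0 : ℝ) 1, c * lamt * x ≤ deriv W1 x) ∧
        StrictMonoOn W1 (Set.Icc (0 : ℝ) 1) ∧
        (∃! x₀, x₀ ∈ Set.Icc (0 : ℝ) 1 ∧ W1 x₀ = 0) ∧
        (∀ x₀ ∈ Set.Icc (0 : ℝ) 1, W1 x₀ = 0 → x₀ ∈ Set.Ioo (0 : ℝ) 1) := by
  obtain ⟨hμ0, hμ1⟩ := sq_div_sq_mem_Ioo ha hal
  obtain ⟨hK0, hK⟩ := angular_coupling_bounds ha hal hrm hΞ hω
  set μ := a ^ 2 / l ^ 2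
  set K := Ξ * a ^ 2 * ωm ^ 2 + 2 * a * ωm * Ξ * a ^ 2 / l ^ 2
  have hΞ2 : 0 < Ξ ^ 2 := pow_pos (by linarith) 2
  have hKΞ : K / Ξ ^ 2 < 1 + μ := (div_lt_iff₀ hΞ2).2 (by linarith)
  have hc : 0 < min (2 * (1 + μ - K / Ξ ^ 2)) (2 * (1 - μ)) := lt_min (by linarith) (by linarith)
  refine ⟨_, hc, fun lamt hlam W1 hW1 => ?_⟩
  have hW1 : W1 = evenQuartic (Ξ ^ 2 - lamt) (lamt * (1 + μ) - K) (K - lamt * μ) := by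
    rw [hW1]; funext x; unfold evenQuartic; ring
  obtain ⟨hq, hqr⟩ := min_mul_le_quartic_coeffs hK0 hΞ2 hlam.le
  subst hW1
  exact evenQuartic_unique_root (mul_pos hc (hΞ2.trans hlam)) hq hqr (by linarith) (by ring_nf; exact hΞ2)
end

section
/- Let f : [0, ∞) → ℝ be continuous with f(y) ≥ c > 0 for all y (uniform positive lower bound), and define ξ : [0, ∞) → ℝ by ξ(y) = the increasing solution of (ξ'(y))² · (ξ(y)² − α²) = f(y) normalized so that ∫_{y₀}^{y} √f = ∫_{α}^{ξ(y)} √(τ² − α²) dτ for y ≥ y₀ (where ξ(y₀) = α ≥ 0). Then for all sufficiently large y: ξ(y)² ≍ y, i.e. there are constants 0 < c₁ ≤ c₂ with c₁ y ≤ ξ(y)² ≤ c₂ y. -/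
/-- Liouville-transform growth estimate: if `f` is continuous on `[0,∞)` with uniform bounds
`0 < c ≤ f ≤ C`, and `ξ` is the increasing solution of the turning-point normalization
`∫_{y₀}^y √f = ∫_α^{ξ(y)} √(τ² − α²) dτ` with `ξ(y₀) = α ≥ 0`, then `ξ(y)² ≍ y` for all
sufficiently large `y`. -/
theorem liouville_transform_growth (f ξ : ℝ → ℝ) (c C α y₀ : ℝ)
    (hc : 0 < c) (hcC : c ≤ C) (hα : 0 ≤ α) (hy₀ : 0 ≤ y₀)
    (hf : ContinuousOn f (Set.Ici (0 : ℝ)))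
    (hflb : ∀ y, 0 ≤ y → c ≤ f y) (hfub : ∀ y, 0 ≤ y → f y ≤ C)
    (hξ0 : ξ y₀ = α)
    (hmono : StrictMonoOn ξ (Set.Ici y₀))
    (hint : ∀ y, y₀ ≤ y →
      (∫ t in y₀..y, Real.sqrt (f t)) = ∫ τ in α..(ξ y), Real.sqrt (τ ^ 2 - α ^ 2)) :
    ∃ c₁ c₂ Y : ℝ, 0 < c₁ ∧ c₁ ≤ c₂ ∧
      ∀ y, Y ≤ y → c₁ * y ≤ (ξ y) ^ 2 ∧ (ξ y) ^ 2 ≤ c₂ * y := by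
  have hsc : 0 < Real.sqrt c := Real.sqrt_pos.2 hc
  have hscC : Real.sqrt c ≤ Real.sqrt C := Real.sqrt_le_sqrt hcC
  refine ⟨Real.sqrt c, 2 * α ^ 2 + 4 * Real.sqrt C, max 1 (2 * y₀), hsc, ?_, ?_⟩
  · nlinarith [sq_nonneg α, Real.sqrt_nonneg C]
  · intro y hy
    have hy1 : (1 : ℝ) ≤ y := le_trans (le_max_left _ _) hy
    have hy2 : 2 * y₀ ≤ y := le_trans (le_max_right _ _) hy
    have hyy₀ : y₀ < y := by
      rcases lt_or_ge 0 y₀ with h | h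
      · linarith
      · linarith
    have hξα : α < ξ y := by
      have := hmono (Set.self_mem_Ici) (Set.mem_Ici.2 hyy₀.le) hyy₀
      rwa [hξ0] at this
    -- integrability of √f on [y₀, y]
    have hsqf : IntervalIntegrable (fun t => Real.sqrt (f t)) MeasureTheory.volume y₀ y := by
      apply ContinuousOn.intervalIntegrable
      apply ContinuousOn.sqrt
      apply hf.mono
      rw [Set.uIcc_of_le hyy₀.le]
      exact fun x hx => le_trans hy₀ hx.1
    -- lower bound on LHS
    have hL : Real.sqrt c * (y - y₀) ≤ ∫ t in y₀..y, Real.sqrt (f t) := by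
      have h := intervalIntegral.integral_mono_on hyy₀.le
        (intervalIntegrable_const (c := Real.sqrt c)) hsqf
        (fun x hx => Real.sqrt_le_sqrt (hflb x (le_trans hy₀ hx.1)))
      rw [intervalIntegral.integral_const, smul_eq_mul] at h
      linarith
    -- upper bound on LHS
    have hU : (∫ t in y₀..y, Real.sqrt (f t)) ≤ Real.sqrt C * (y - y₀) := by
      have h := intervalIntegral.integral_mono_on hyy₀.le hsqf
        (intervalIntegrable_const (c := Real.sqrt C))
        (fun x hx => Real.sqrt_le_sqrt (hfub x (le_trans hy₀ hx.1)))
      rw [intervalIntegral.integral_const, smul_eq_mul] at h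
      linarith
    -- integrability of √(τ² - α²)
    have hg : IntervalIntegrable (fun τ => Real.sqrt (τ ^ 2 - α ^ 2))
        MeasureTheory.volume α (ξ y) :=
      (Real.continuous_sqrt.comp (by continuity)).continuousOn.intervalIntegrable
    -- upper bound on RHS
    have hRub : (∫ τ in α..(ξ y), Real.sqrt (τ ^ 2 - α ^ 2)) ≤ (ξ y ^ 2 - α ^ 2) / 2 := by
      have h := intervalIntegral.integral_mono_on hξα.le hg intervalIntegral.intervalIntegrable_id
        (fun τ hτ => by
          have hτ0 : 0 ≤ τ := le_trans hα hτ.1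
          calc Real.sqrt (τ ^ 2 - α ^ 2) ≤ Real.sqrt (τ ^ 2) :=
                Real.sqrt_le_sqrt (by nlinarith)
            _ = τ := by rw [Real.sqrt_sq hτ0])
      rwa [show (∫ x in α..ξ y, x) = (ξ y ^ 2 - α ^ 2) / 2 from open intervalIntegral in integral_id] at h
    -- lower bound on RHS
    have hRlb : (ξ y - α) ^ 2 / 2 ≤ ∫ τ in α..(ξ y), Real.sqrt (τ ^ 2 - α ^ 2) := by
      have h := intervalIntegral.integral_mono_on hξα.le
        (intervalIntegral.intervalIntegrable_id.sub (intervalIntegrable_const (c := α))) hg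
        (fun τ hτ => by
          have hτα : α ≤ τ := hτ.1
          have h1 : (τ - α) ^ 2 ≤ τ ^ 2 - α ^ 2 := by nlinarith
          calc τ - α = Real.sqrt ((τ - α) ^ 2) := (Real.sqrt_sq (by linarith)).symm
            _ ≤ Real.sqrt (τ ^ 2 - α ^ 2) := Real.sqrt_le_sqrt h1)
      have heq : (∫ τ in α..(ξ y), (τ - α)) = (ξ y - α) ^ 2 / 2 := by
        rw [intervalIntegral.integral_sub intervalIntegral.intervalIntegrable_id
          (intervalIntegrable_const (c := α)),
          show (∫ x in α..ξ y, x) = (ξ y ^ 2 - α ^ 2) / 2 from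
            open intervalIntegral in integral_id,
          intervalIntegral.integral_const, smul_eq_mul]
        ring
      rwa [heq] at h
    have hkey := hint y hyy₀.le
    constructor
    · -- ξ² ≥ √c · y
      have h1 : Real.sqrt c * (y - y₀) ≤ (ξ y ^ 2 - α ^ 2) / 2 := by
        rw [hkey] at hL; linarith
      nlinarith [sq_nonneg α]
    · -- ξ² ≤ (2α² + 4√C) y
      have h2 : (ξ y - α) ^ 2 / 2 ≤ Real.sqrt C * (y - y₀) := by
        rw [hkey] at hU; linarith
      have h3 : (ξ y - α) ^ 2 ≤ 2 * Real.sqrt C * y := by nlinarith [Real.sqrt_nonneg C]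
      nlinarith [sq_nonneg (ξ y - 2 * α), sq_nonneg α, Real.sqrt_nonneg C]
end

section
/- Angular eigenvalue lower bound near characteristic frequencies: let 0 < a < l, Ξ = 1 − a²/l², and for r ∈ [r₋, r₊] set ω_r := aΞ/(r² + a²). There exists ε > 0 (depending only on a, l, r₋, r₊) such that: if m ∈ ℤ, ω ∈ ℝ and |ω − ω_r m| ≤ ε|m| for some r ∈ [r₋, r₊], then for all θ ∈ (0, π), (m Ξ/sin θ − aω sin θ)² ≥ c m² for a constant c > 0 depending only on a, l, r₋, r₊. -/
/-- Angular lower bound near characteristic frequencies: with `Ξ = 1 − a²/l²` and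
`ω_r = aΞ/(r² + a²)`, there is `ε > 0` such that whenever `|ω − ω_r m| ≤ ε|m|` for some
`r ∈ [r₋, r₊]`, then `(mΞ/sin θ − aω sin θ)² ≥ c m²` for all `θ ∈ (0, π)`, with `c > 0`
depending only on `a, l, r₋, r₊`. -/
theorem angular_lower_bound_near_poles (a l rm rp : ℝ)
    (ha : 0 < a) (hal : a < l) (hrm : 0 < rm) (hrmrp : rm ≤ rp) :
    ∃ ε > (0 : ℝ), ∃ c > (0 : ℝ), ∀ (m : ℤ) (ω r : ℝ), r ∈ Set.Icc rm rp →
      |ω - (a * (1 - a ^ 2 / l ^ 2) / (r ^ 2 + a ^ 2)) * (m : ℝ)| ≤ ε * |(m : ℝ)| →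
      ∀ θ ∈ Set.Ioo (0 : ℝ) Real.pi,
        c * (m : ℝ) ^ 2 ≤
          ((m : ℝ) * (1 - a ^ 2 / l ^ 2) / Real.sin θ - a * ω * Real.sin θ) ^ 2 := by
  have hl : 0 < l ^ 2 := by nlinarith
  have hΞ : 0 < 1 - a ^ 2 / l ^ 2 := by
    rw [sub_pos, div_lt_one hl]; nlinarith
  set Ξ := 1 - a ^ 2 / l ^ 2 with hΞdef
  have hden : 0 < rm ^ 2 + a ^ 2 := by positivity
  set c0 := Ξ * rm ^ 2 / (2 * (rm ^ 2 + a ^ 2)) with hc0def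
  have hc0 : 0 < c0 := by
    rw [hc0def]
    exact div_pos (mul_pos hΞ (by positivity)) (by positivity)
  refine ⟨c0 / a, div_pos hc0 ha, c0 ^ 2, pow_pos hc0 2, ?_⟩
  intro m ω r hr hω θ hθ
  have hs : 0 < Real.sin θ := Real.sin_pos_of_pos_of_lt_pi hθ.1 hθ.2
  have hs1 : Real.sin θ ≤ 1 := Real.sin_le_one θ
  set s := Real.sin θ with hsdef
  set wr := a * Ξ / (r ^ 2 + a ^ 2) with hwrdef
  have hr2 : rm ^ 2 + a ^ 2 ≤ r ^ 2 + a ^ 2 := by nlinarith [hr.1, hr.2]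
  have hrpos : 0 < r ^ 2 + a ^ 2 := lt_of_lt_of_le hden hr2
  have hwrpos : 0 < wr := by rw [hwrdef]; exact div_pos (mul_pos ha hΞ) hrpos
  have hK : 2 * c0 ≤ Ξ / s - a * wr * s := by
    have h1 : Ξ ≤ Ξ / s := by
      rw [le_div_iff₀ hs]
      have := mul_le_mul_of_nonneg_left hs1 hΞ.le
      linarith
    have h2 : a * wr * s ≤ Ξ * a ^ 2 / (rm ^ 2 + a ^ 2) := by
      have h2a : a * wr ≤ Ξ * a ^ 2 / (rm ^ 2 + a ^ 2) := by
        rw [hwrdef, mul_div_assoc', div_le_div_iff₀ hrpos hden]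
        nlinarith [mul_le_mul_of_nonneg_left hr2 (mul_pos (pow_pos ha 2) hΞ).le]
      have := mul_le_mul_of_nonneg_left hs1 (mul_pos ha hwrpos).le
      linarith
    have h3 : Ξ * a ^ 2 / (rm ^ 2 + a ^ 2) = Ξ - 2 * c0 := by
      rw [hc0def]; field_simp; ring
    linarith
  have hid : (m : ℝ) * Ξ / s - a * ω * s
      = (m : ℝ) * (Ξ / s - a * wr * s) - a * (ω - wr * (m : ℝ)) * s := by
    field_simp; ring
  have hKnn : 0 ≤ Ξ / s - a * wr * s := by linarith
  have habs : c0 * |(m : ℝ)| ≤ |(m : ℝ) * Ξ / s - a * ω * s| := by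
    rw [hid]
    have h1 : 2 * c0 * |(m : ℝ)| ≤ |(m : ℝ) * (Ξ / s - a * wr * s)| := by
      rw [abs_mul, abs_of_nonneg hKnn]
      have := mul_le_mul_of_nonneg_left hK (abs_nonneg (m : ℝ))
      linarith
    have h2 : |a * (ω - wr * (m : ℝ)) * s| ≤ c0 * |(m : ℝ)| := by
      rw [abs_mul, abs_mul, abs_of_pos ha, abs_of_pos hs]
      have hδ : |ω - wr * (m : ℝ)| ≤ c0 / a * |(m : ℝ)| := hω
      have hstep : a * |ω - wr * (m : ℝ)| ≤ c0 * |(m : ℝ)| := by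
        calc a * |ω - wr * (m : ℝ)| ≤ a * (c0 / a * |(m : ℝ)|) :=
              mul_le_mul_of_nonneg_left hδ ha.le
          _ = c0 * |(m : ℝ)| := by field_simp
      have h4 := mul_le_mul_of_nonneg_left hs1
        (mul_nonneg ha.le (abs_nonneg (ω - wr * (m : ℝ))))
      linarith
    have h3 := abs_sub_abs_le_abs_sub ((m : ℝ) * (Ξ / s - a * wr * s))
      (a * (ω - wr * (m : ℝ)) * s)
    linarith
  calc c0 ^ 2 * (m : ℝ) ^ 2 = (c0 * |(m : ℝ)|) ^ 2 := by rw [mul_pow, sq_abs]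
    _ ≤ |(m : ℝ) * Ξ / s - a * ω * s| ^ 2 :=
        pow_le_pow_left₀ (mul_nonneg hc0.le (abs_nonneg _)) habs 2
    _ = ((m : ℝ) * Ξ / s - a * ω * s) ^ 2 := sq_abs _
end
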